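/- Let k ≥ 2 be an integer, P' = P'_{8·3^k} the presented group ⟨x, y, z ∣ x² = (xy)², (xy)² = y², z x z^{-1} = y, z y z^{-1} = x y, z^{3^k} = 1⟩, and ζ_n = e^{2πi/n}. For an integer s, let ς_s : P' → GL(3,ℂ) denote the group homomorphism with ς_s(x) = [[-1,-1,-1],[0,0,1],[0,1,0]], ς_s(y) = [[0,0,1],[-1,-1,-1],[1,0,0]], and ς_s(z) = ζ_{3^k}^s · [[-1,-1,-1],[0,1,0],[1,0,0]]. Then for every integer s, the representation ς_{3^{k-1}+s} is isomorphic to the representation ς_s: there is a ℂ-linear equivalence of ℂ³ with itself that for every g ∈ P' intertwines ς_{3^{k-1}+s}(g) with ς_s(g). -/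

import Mathlib

set_option maxHeartbeats 2000000


/-- The relations of the presented group
`P'_{8·3^k} = ⟨x, y, z ∣ x² = (xy)², (xy)² = y², z x z⁻¹ = y, z y z⁻¹ = x y, z^{3^k} = 1⟩`,
where `x` is the first generator, `y` the second and `z` the third one. -/
def Prels (k : ℕ) : Set (FreeGroup (Fin 3)) :=
  {FreeGroup.of 0 ^ 2 * ((FreeGroup.of 0 * FreeGroup.of 1) ^ 2)⁻¹,
   (FreeGroup.of 0 * FreeGroup.of 1) ^ 2 * (FreeGroup.of 1 ^ 2)⁻¹,
   FreeGroup.of 2 * FreeGroup.of 0 * (FreeGroup.of 2)⁻¹ * (FreeGroup.of 1)⁻¹,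
   FreeGroup.of 2 * FreeGroup.of 1 * (FreeGroup.of 2)⁻¹ *
     (FreeGroup.of 0 * FreeGroup.of 1)⁻¹,
   FreeGroup.of 2 ^ (3 ^ k)}

/-- The presented group `P'_{8·3^k}`. -/
abbrev PGroup (k : ℕ) : Type := PresentedGroup (Prels k)

/-- The generator `x` of `P'_{8·3^k}`. -/
noncomputable def Px (k : ℕ) : PGroup k := PresentedGroup.of 0

/-- The generator `y` of `P'_{8·3^k}`. -/
noncomputable def Py (k : ℕ) : PGroup k := PresentedGroup.of 1

/-- The generator `z` of `P'_{8·3^k}`. -/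
noncomputable def Pz (k : ℕ) : PGroup k := PresentedGroup.of 2

/-- `ζ_n = e^{2πi/n}`. -/
noncomputable def zeta (n : ℕ) : ℂ := Complex.exp (2 * Real.pi * Complex.I / n)

/-- `ω = ζ_3 = e^{2πi/3}`. -/
noncomputable def omg : ℂ := zeta 3

/-- For `k ≥ 2`, `P' = P'_{8·3^k}`, and the family of three-dimensional representations
`ς_s : P' → GL(3,ℂ)` with `ς_s(x) = [[-1,-1,-1],[0,0,1],[0,1,0]]`,
`ς_s(y) = [[0,0,1],[-1,-1,-1],[1,0,0]]` and
`ς_s(z) = ζ_{3^k}^s · [[-1,-1,-1],[0,1,0],[1,0,0]]`: for every integer `s` the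
representation `ς_{3^{k-1}+s}` is isomorphic to `ς_s`, i.e. there is a ℂ-linear
equivalence of `ℂ³` with itself intertwining `ς_{3^{k-1}+s}(g)` with `ς_s(g)` for every
`g ∈ P'`. -/
theorem three_dim_rep_iso_PGroup (k : ℕ) (hk : 2 ≤ k)
    (ς : ℤ → (PGroup k →* Matrix.GeneralLinearGroup (Fin 3) ℂ))
    (hx : ∀ s : ℤ, (ς s (Px k) : Matrix (Fin 3) (Fin 3) ℂ) =
        !![-1, -1, -1; 0, 0, 1; 0, 1, 0])
    (hy : ∀ s : ℤ, (ς s (Py k) : Matrix (Fin 3) (Fin 3) ℂ) =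
        !![0, 0, 1; -1, -1, -1; 1, 0, 0])
    (hz : ∀ s : ℤ, (ς s (Pz k) : Matrix (Fin 3) (Fin 3) ℂ) =
        zeta (3 ^ k) ^ s • !![-1, -1, -1; 0, 1, 0; 1, 0, 0]) :
    ∀ s : ℤ,
      ∃ e : (Fin 3 → ℂ) ≃ₗ[ℂ] (Fin 3 → ℂ),
        ∀ (g : PGroup k) (v : Fin 3 → ℂ),
          e ((ς (3 ^ (k - 1) + s) g : Matrix (Fin 3) (Fin 3) ℂ).mulVec v) =
            (ς s g : Matrix (Fin 3) (Fin 3) ℂ).mulVec (e v) := by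
  intro s
  set ω : ℂ := Complex.exp (2 * Real.pi * Complex.I / 3) with hωdef
  have hπ : (2 * (Real.pi : ℂ) * Complex.I) ≠ 0 := by
    simp [Real.pi_ne_zero, Complex.I_ne_zero]
  have hω3 : ω ^ 3 = 1 := by
    rw [hωdef, ← Complex.exp_nat_mul]
    rw [show ((3 : ℕ) : ℂ) * (2 * (Real.pi : ℂ) * Complex.I / 3) =
        2 * (Real.pi : ℂ) * Complex.I by push_cast; ring]
    exact Complex.exp_two_pi_mul_I
  have hωne : ω ≠ 1 := by
    intro hone
    rw [hωdef, Complex.exp_eq_one_iff] at hone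
    obtain ⟨n, hn⟩ := hone
    have h : (2 * (Real.pi : ℂ) * Complex.I) * ((3 * n : ℤ) : ℂ) =
        (2 * (Real.pi : ℂ) * Complex.I) * 1 := by
      push_cast
      linear_combination (-3 : ℂ) * hn
    have h2 : ((3 * n : ℤ) : ℂ) = 1 := mul_left_cancel₀ hπ h
    have h3 : (3 * n : ℤ) = 1 := by exact_mod_cast h2
    omega
  have hω : ω ^ 2 + ω + 1 = 0 := by
    have h0 : (ω - 1) * (ω ^ 2 + ω + 1) = 0 := by linear_combination hω3
    rcases mul_eq_zero.mp h0 with h | h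
    · exact absurd (sub_eq_zero.mp h) hωne
    · exact h
  -- ζ and the key scalar identity
  have hζne : zeta (3 ^ k) ≠ 0 := Complex.exp_ne_zero _
  have hζ : zeta (3 ^ k) ^ ((3 : ℤ) ^ (k - 1)) = ω := by
    obtain ⟨m, rfl⟩ : ∃ m, k = m + 1 := ⟨k - 1, by omega⟩
    simp only [Nat.add_sub_cancel]
    rw [show ((3 : ℤ) ^ m) = ((3 ^ m : ℕ) : ℤ) by push_cast; ring,
      zpow_natCast, zeta, ← Complex.exp_nat_mul, hωdef]
    congr 1
    have h3 : (3 : ℂ) ≠ 0 := by norm_num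
    have h3m : ((3 : ℂ) ^ m) ≠ 0 := pow_ne_zero _ h3
    push_cast
    rw [pow_succ]
    field_simp
  -- the intertwining matrices
  set T : Matrix (Fin 3) (Fin 3) ℂ :=
    !![-1/2, -1/2 + ω/2, -1 - ω/2;
       1/2 + ω, 1/2 + ω/2, 1 + ω/2;
       -1/2 - ω, 1/2 - ω/2, -ω/2] with hT
  set T' : Matrix (Fin 3) (Fin 3) ℂ :=
    !![-1/2, -1 - ω/2, -1/2 + ω/2;
       -1/2 - ω, -ω/2, 1/2 - ω/2;
       1/2 + ω, 1 + ω/2, 1/2 + ω/2] with hT'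
  have hTT' : T * T' = 1 := by
    ext i j
    fin_cases i <;> fin_cases j <;>
      simp [hT, hT', Matrix.mul_apply, Fin.sum_univ_three, Matrix.vecHead, Matrix.vecTail, Matrix.one_apply]
    · linear_combination (-1 : ℂ) * hω
    · linear_combination (-1/2 : ℂ) * hω
    · linear_combination (-1/2 : ℂ) * hω
    · linear_combination (0 : ℂ) * hω
    · linear_combination (-1/2 : ℂ) * hω
    · linear_combination (1/2 : ℂ) * hω
    · linear_combination (0 : ℂ) * hω
    · linear_combination (1/2 : ℂ) * hω
    · linear_combination (-1/2 : ℂ) * hω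
  have hT'T : T' * T = 1 := by
    ext i j
    fin_cases i <;> fin_cases j <;>
      simp [hT, hT', Matrix.mul_apply, Fin.sum_univ_three, Matrix.vecHead, Matrix.vecTail, Matrix.one_apply]
    · linear_combination (-1 : ℂ) * hω
    · linear_combination (-1/2 : ℂ) * hω
    · linear_combination (-1/2 : ℂ) * hω
    · linear_combination (0 : ℂ) * hω
    · linear_combination (-1/2 : ℂ) * hω
    · linear_combination (1/2 : ℂ) * hω
    · linear_combination (0 : ℂ) * hω
    · linear_combination (1/2 : ℂ) * hω
    · linear_combination (-1/2 : ℂ) * hω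
  have hXc : T * !![-1, -1, -1; 0, 0, 1; 0, 1, 0] =
      !![(-1 : ℂ), -1, -1; 0, 0, 1; 0, 1, 0] * T := by
    ext i j
    fin_cases i <;> fin_cases j <;>
      (simp [hT, Matrix.mul_apply, Fin.sum_univ_three, Matrix.vecHead, Matrix.vecTail]; try ring)
  have hYc : T * !![0, 0, 1; -1, -1, -1; 1, 0, 0] =
      !![(0 : ℂ), 0, 1; -1, -1, -1; 1, 0, 0] * T := by
    ext i j
    fin_cases i <;> fin_cases j <;>
      (simp [hT, Matrix.mul_apply, Fin.sum_univ_three, Matrix.vecHead, Matrix.vecTail]; try ring)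
  have hMc : ω • (T * !![-1, -1, -1; 0, 1, 0; 1, 0, 0]) =
      !![(-1 : ℂ), -1, -1; 0, 1, 0; 1, 0, 0] * T := by
    ext i j
    fin_cases i <;> fin_cases j <;>
      simp [hT, Matrix.mul_apply, Fin.sum_univ_three, Matrix.vecHead, Matrix.vecTail, Matrix.smul_apply, smul_eq_mul]
    · linear_combination (-1/2 : ℂ) * hω
    · linear_combination (1/2 : ℂ) * hω
    · linear_combination (0 : ℂ) * hω
    · linear_combination (-1/2 : ℂ) * hω
    · linear_combination (-1/2 : ℂ) * hω
    · linear_combination (-1 : ℂ) * hω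
    · linear_combination (1/2 : ℂ) * hω
    · linear_combination (1/2 : ℂ) * hω
    · linear_combination (1 : ℂ) * hω
  -- the key intertwining identity
  have key : ∀ g : PGroup k,
      T * (ς (3 ^ (k - 1) + s) g : Matrix (Fin 3) (Fin 3) ℂ) =
        (ς s g : Matrix (Fin 3) (Fin 3) ℂ) * T := by
    intro g
    have hg : g ∈ Subgroup.closure
        (Set.range (PresentedGroup.of : Fin 3 → PGroup k)) := by
      rw [PresentedGroup.closure_range_of]
      exact Subgroup.mem_top g
    induction hg using Subgroup.closure_induction with
    | mem a ha =>
      obtain ⟨i, rfl⟩ := ha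
      fin_cases i
      · show T * (ς (3 ^ (k - 1) + s) (Px k) : Matrix (Fin 3) (Fin 3) ℂ) =
            (ς s (Px k) : Matrix (Fin 3) (Fin 3) ℂ) * T
        rw [hx, hx]
        exact hXc
      · show T * (ς (3 ^ (k - 1) + s) (Py k) : Matrix (Fin 3) (Fin 3) ℂ) =
            (ς s (Py k) : Matrix (Fin 3) (Fin 3) ℂ) * T
        rw [hy, hy]
        exact hYc
      · show T * (ς (3 ^ (k - 1) + s) (Pz k) : Matrix (Fin 3) (Fin 3) ℂ) =
            (ς s (Pz k) : Matrix (Fin 3) (Fin 3) ℂ) * T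
        rw [hz, hz]
        rw [zpow_add₀ hζne, hζ, mul_smul, Matrix.smul_mul, Matrix.mul_smul,
          Matrix.mul_smul, smul_comm, hMc]
    | one =>
      simp
    | mul a b _ _ ha hb =>
      rw [map_mul, map_mul, Units.val_mul, Units.val_mul, ← mul_assoc, ha,
        mul_assoc, hb, ← mul_assoc]
    | inv a _ ha =>
      rw [map_inv, map_inv]
      set u := ς (3 ^ (k - 1) + s) a
      set v := ς s a
      have h1 : (↑v : Matrix (Fin 3) (Fin 3) ℂ) *
          (T * ((↑(u⁻¹) : Matrix (Fin 3) (Fin 3) ℂ))) = T := by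
        rw [← mul_assoc, ← ha, mul_assoc, Units.mul_inv, mul_one]
      have h2 : (↑v : Matrix (Fin 3) (Fin 3) ℂ) *
          (((↑(v⁻¹) : Matrix (Fin 3) (Fin 3) ℂ)) * T) = T := by
        rw [← mul_assoc, Units.mul_inv, one_mul]
      exact (Units.mul_right_inj v).mp (h1.trans h2.symm)
  refine ⟨LinearEquiv.ofLinear (Matrix.toLin' T) (Matrix.toLin' T') ?_ ?_, ?_⟩
  · rw [← Matrix.toLin'_mul, hTT', Matrix.toLin'_one]
  · rw [← Matrix.toLin'_mul, hT'T, Matrix.toLin'_one]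
  · intro g v
    show Matrix.toLin' T _ = _
    rw [Matrix.toLin'_apply, Matrix.mulVec_mulVec, key g, ← Matrix.mulVec_mulVec]
    rfl
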